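/- arXiv:2205.14387 — 2 statements merged into one kernel-verified Lean document; each statement's English description precedes it below -/
import Mathlib

section
/- If ties are P-null at U, then the choice-probability vector p(U) is a subgradient of g at U: for every U' ∈ ℝ^A, g(U') ≥ g(U) + Σ_{a∈A} p_a(U)·(U'_a − U_a). -/
/-!
For each fixed `ε`, if `a` maximizes `U + ε` then
`max (U' + ε) ≥ U' a + ε a = max (U + ε) + (U' a - U a)`. When ties are null, the maximizer is
almost surely the strict winner, so the vector of indicators of the strict-winner events is almost
surely a subgradient of `U ↦ max (U + ε)`; integrating, and using that the strict-winner event of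
`a` has probability `p_a(U)`, gives the claim.
-/

open MeasureTheory

noncomputable section

variable {A : Type*} [Fintype A] [Nonempty A]

/-- The expected-maximum (social surplus) function
`g(U) = ∫ max_{a ∈ A} (U_a + ε_a) dP(ε)`. -/
def gfun (P : Measure (A → ℝ)) (U : A → ℝ) : ℝ :=
  ∫ ε, (Finset.univ.sup' Finset.univ_nonempty fun a => U a + ε a) ∂P

/-- The choice probability `p_a(U) = P({ε : U_a + ε_a > U_b + ε_b for all b ≠ a})`. -/
def choiceProb (P : Measure (A → ℝ)) (U : A → ℝ) (a : A) : ℝ :=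
  (P {ε | ∀ b, b ≠ a → U b + ε b < U a + ε a}).toReal

/-- `P` has full support: every nonempty open set has positive measure. -/
def FullSupport (P : Measure (A → ℝ)) : Prop :=
  ∀ s : Set (A → ℝ), IsOpen s → s.Nonempty → 0 < P s

/-- Ties are `P`-null at `U`: the event that the maximum of `a ↦ U_a + ε_a`
is attained at more than one alternative has probability zero. -/
def TiesNull (P : Measure (A → ℝ)) (U : A → ℝ) : Prop :=
  P {ε | ∃ a b : A, a ≠ b ∧ (∀ c, U c + ε c ≤ U a + ε a) ∧ (∀ c, U c + ε c ≤ U b + ε b)} = 0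

section

variable {ι : Type*}

theorem integrable_finset_sup' {α : Type*} [MeasurableSpace α] {μ : Measure α} {s : Finset ι}
    (hs : s.Nonempty) {f : ι → α → ℝ} (hf : ∀ i ∈ s, Integrable (f i) μ) :
    Integrable (fun x => s.sup' hs fun i => f i x) μ := by
  simpa only [← Finset.sup'_apply] using
    Finset.sup'_induction (p := (Integrable · μ)) hs f (fun _ hg _ hh => hg.sup hh) hf

theorem integrable_apply_of_integrable_sup'_abs [Fintype ι] [Nonempty ι]
    {P : Measure (ι → ℝ)}
    (hint : Integrable (fun ε : ι → ℝ => Finset.univ.sup' Finset.univ_nonempty fun a => |ε a|) P)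
    (a : ι) : Integrable (fun ε : ι → ℝ => ε a) P :=
  hint.mono (measurable_pi_apply a).aestronglyMeasurable <| .of_forall fun ε => by
    rw [Real.norm_eq_abs, Real.norm_eq_abs]
    exact (Finset.le_sup' (fun b => |ε b|) (Finset.mem_univ a)).trans (le_abs_self _)

theorem integrable_sup'_add [Fintype ι] [Nonempty ι] {P : Measure (ι → ℝ)} [IsFiniteMeasure P]
    (hint : Integrable (fun ε : ι → ℝ => Finset.univ.sup' Finset.univ_nonempty fun a => |ε a|) P)
    (V : ι → ℝ) :
    Integrable (fun ε : ι → ℝ => Finset.univ.sup' Finset.univ_nonempty fun a => V a + ε a) P :=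
  integrable_finset_sup' _ fun a _ =>
    (integrable_const (V a)).add (integrable_apply_of_integrable_sup'_abs hint a)

def winnerSet (U : ι → ℝ) (a : ι) : Set (ι → ℝ) :=
  {ε | ∀ b, b ≠ a → U b + ε b < U a + ε a}

theorem measurableSet_winnerSet [Countable ι] (U : ι → ℝ) (a : ι) :
    MeasurableSet (winnerSet U a) := by
  simp only [winnerSet, Set.ofPred_forall]
  exact .iInter fun b => .iInter fun _ => measurableSet_lt (by fun_prop) (by fun_prop)

theorem eq_of_mem_winnerSet {U ε : ι → ℝ} {a c : ι} (ha : ε ∈ winnerSet U a)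
    (hc : ε ∈ winnerSet U c) : c = a :=
  by_contra fun hca => (ha c hca).not_gt (hc a (Ne.symm hca))

theorem sum_indicator_winnerSet_of_mem [Fintype ι] {U ε : ι → ℝ} {a : ι}
    (ha : ε ∈ winnerSet U a) (v : ι → ℝ) :
    ∑ c, (winnerSet U c).indicator (fun _ => v c) ε = v a := by
  rw [Finset.sum_eq_single_of_mem a (Finset.mem_univ a)
    fun c _ hca => Set.indicator_of_notMem (fun hc => hca (eq_of_mem_winnerSet ha hc)) _]
  exact Set.indicator_of_mem ha _

theorem mem_winnerSet_of_forall_le {U ε : ι → ℝ} {a : ι}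
    (hties : ¬ ∃ a b : ι, a ≠ b ∧ (∀ c, U c + ε c ≤ U a + ε a) ∧ (∀ c, U c + ε c ≤ U b + ε b))
    (hmax : ∀ c, U c + ε c ≤ U a + ε a) : ε ∈ winnerSet U a := fun b hba =>
  (hmax b).lt_of_ne fun hb =>
    hties ⟨a, b, Ne.symm hba, hmax, fun c => (hmax c).trans_eq hb.symm⟩

theorem sup'_add_sum_indicator_winnerSet_le [Fintype ι] [Nonempty ι] {U ε : ι → ℝ}
    (hties : ¬ ∃ a b : ι, a ≠ b ∧ (∀ c, U c + ε c ≤ U a + ε a) ∧ (∀ c, U c + ε c ≤ U b + ε b))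
    (U' : ι → ℝ) :
    (Finset.univ.sup' Finset.univ_nonempty fun a => U a + ε a)
        + ∑ c, (winnerSet U c).indicator (fun _ => U' c - U c) ε
      ≤ Finset.univ.sup' Finset.univ_nonempty fun a => U' a + ε a := by
  obtain ⟨a, -, ha⟩ := Finset.exists_mem_eq_sup' Finset.univ_nonempty fun a => U a + ε a
  have hmax : ∀ c, U c + ε c ≤ U a + ε a := fun c =>
    ha ▸ Finset.le_sup' (fun a => U a + ε a) (Finset.mem_univ c)
  rw [sum_indicator_winnerSet_of_mem (mem_winnerSet_of_forall_le hties hmax), ha]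
  calc U a + ε a + (U' a - U a) = U' a + ε a := by ring
    _ ≤ _ := Finset.le_sup' (fun a => U' a + ε a) (Finset.mem_univ a)

end

/-- If ties are `P`-null at `U`, then the choice-probability vector
`p(U)` is a subgradient of `g` at `U`. -/
theorem stmt6 (P : Measure (A → ℝ)) [IsProbabilityMeasure P]
    (hint : Integrable (fun ε : A → ℝ =>
      Finset.univ.sup' Finset.univ_nonempty fun a => |ε a|) P)
    (U : A → ℝ) (hties : TiesNull P U) :
    ∀ U' : A → ℝ, gfun P U' ≥ gfun P U + ∑ a, choiceProb P U a * (U' a - U a) := by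
  intro U'
  have hind : ∀ a, Integrable ((winnerSet U a).indicator fun _ => U' a - U a) P := fun a =>
    (integrable_const _).indicator (measurableSet_winnerSet U a)
  have hsum : Integrable (fun ε => ∑ a, (winnerSet U a).indicator (fun _ => U' a - U a) ε) P :=
    integrable_finsetSum _ fun a _ => hind a
  have hsurplus : gfun P U + ∑ a, choiceProb P U a * (U' a - U a)
      = ∫ ε, (Finset.univ.sup' Finset.univ_nonempty fun a => U a + ε a)
          + ∑ a, (winnerSet U a).indicator (fun _ => U' a - U a) ε ∂P := by
    rw [integral_add (integrable_sup'_add hint U) hsum, integral_finsetSum _ fun a _ => hind a]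
    refine congrArg _ (Finset.sum_congr rfl fun a _ => ?_)
    rw [integral_indicator_const _ (measurableSet_winnerSet U a), smul_eq_mul]
    rfl
  rw [ge_iff_le, hsurplus]
  refine integral_mono_ae ((integrable_sup'_add hint U).add hsum) (integrable_sup'_add hint U') ?_
  filter_upwards [measure_eq_zero_iff_ae_notMem.mp hties] with ε hε
  exact sup'_add_sum_indicator_winnerSet_le hε U'

end
end

section
/- If ties are P-null at U, then g(U) = Σ_{a∈A} U_a·p_a(U) + ∫ ε_{a*(ε)} dP(ε): the expected maximum decomposes into the systematic utility of the chosen alternative plus the expected error term of the chosen alternative. -/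
open MeasureTheory

noncomputable section

variable {A : Type*} [Fintype A] [Nonempty A]

/-!
Off the null tie event, the chosen alternative `a*(ε)` is the unique strict maximizer, so
`U_{a*(ε)} = ∑_a U_a 1[ε chooses a]` and `max_a (U_a + ε_a) = U_{a*(ε)} + ε_{a*(ε)}` almost surely.
Integrating the first identity gives `∑_a U_a p_a(U)`; the second then splits `g(U)`.
As `a*` is not assumed measurable, `ε ↦ ε_{a*(ε)}` is integrated only through the a.e. identity
`ε_{a*(ε)} = max_a (U_a + ε_a) - ∑_a U_a 1[ε chooses a]`.
-/

open Finset

section ChoiceEvent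

variable {ι : Type*}

def choiceEvent (U : ι → ℝ) (a : ι) : Set (ι → ℝ) :=
  {ε | ∀ b, b ≠ a → U b + ε b < U a + ε a}

theorem measurableSet_choiceEvent [Countable ι] (U : ι → ℝ) (a : ι) :
    MeasurableSet (choiceEvent U a) := by
  simp only [choiceEvent, Set.ofPred_forall]
  exact .iInter fun b => .iInter fun _ => measurableSet_lt (by fun_prop) (by fun_prop)

theorem disjoint_choiceEvent (U : ι → ℝ) {a b : ι} (hab : a ≠ b) :
    Disjoint (choiceEvent U a) (choiceEvent U b) :=
  Set.disjoint_left.2 fun _ ha hb => lt_asymm (ha b hab.symm) (hb a hab)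

theorem mem_choiceEvent_of_isMax_of_not_tie {U ε : ι → ℝ} {a : ι}
    (hmax : ∀ b, U b + ε b ≤ U a + ε a)
    (hnt : ¬ ∃ a b : ι, a ≠ b ∧ (∀ c, U c + ε c ≤ U a + ε a) ∧
      (∀ c, U c + ε c ≤ U b + ε b)) :
    ε ∈ choiceEvent U a := fun b hb =>
  (hmax b).lt_of_ne fun h => hnt ⟨a, b, hb.symm, hmax, fun c => (hmax c).trans h.ge⟩

variable [Fintype ι]

theorem sum_indicator_choiceEvent_of_mem {U ε : ι → ℝ} {a : ι} (h : ε ∈ choiceEvent U a) :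
    ∑ b, (choiceEvent U b).indicator (fun _ => U b) ε = U a := by
  have hother : ∀ b ≠ a, ε ∉ choiceEvent U b := fun b hba =>
    (disjoint_choiceEvent U hba.symm).notMem_of_mem_left h
  rw [Finset.sum_eq_single a (fun b _ hba => Set.indicator_of_notMem (hother b hba) _)
    (fun ha => absurd (mem_univ a) ha), Set.indicator_of_mem h]

variable (P : Measure (ι → ℝ)) [IsFiniteMeasure P] (U : ι → ℝ)

theorem integrable_sum_indicator_choiceEvent :
    Integrable (fun ε => ∑ b, (choiceEvent U b).indicator (fun _ => U b) ε) P :=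
  integrable_finsetSum _ fun b _ =>
    (integrable_const _).indicator (measurableSet_choiceEvent U b)

theorem integral_sum_indicator_choiceEvent :
    ∫ ε, ∑ b, (choiceEvent U b).indicator (fun _ => U b) ε ∂P =
      ∑ b, U b * P.real (choiceEvent U b) := by
  rw [integral_finsetSum _ fun b _ =>
    (integrable_const _).indicator (measurableSet_choiceEvent U b)]
  refine Finset.sum_congr rfl fun b _ => ?_
  rw [integral_indicator_const _ (measurableSet_choiceEvent U b), smul_eq_mul, mul_comm]

end ChoiceEvent

section Surplus

variable {ι : Type*} [Fintype ι] [Nonempty ι] {P : Measure (ι → ℝ)}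

theorem sup'_add_eq_of_isMax {U ε : ι → ℝ} {a : ι} (hmax : ∀ b, U b + ε b ≤ U a + ε a) :
    univ.sup' univ_nonempty (fun b => U b + ε b) = U a + ε a :=
  le_antisymm (sup'_le _ _ fun b _ => hmax b) (le_sup' (fun b => U b + ε b) (mem_univ a))

theorem integrable_eval_of_integrable_sup'_abs
    (hint : Integrable (fun ε : ι → ℝ => univ.sup' univ_nonempty fun a => |ε a|) P) (a : ι) :
    Integrable (fun ε : ι → ℝ => ε a) P :=
  hint.mono' (measurable_pi_apply a).aestronglyMeasurable
    (ae_of_all _ fun ε => le_sup' (fun b => |ε b|) (mem_univ a))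

theorem integrable_sup'_add_of_integrable_sup'_abs [IsFiniteMeasure P]
    (hint : Integrable (fun ε : ι → ℝ => univ.sup' univ_nonempty fun a => |ε a|) P)
    (U : ι → ℝ) :
    Integrable (fun ε : ι → ℝ => univ.sup' univ_nonempty fun a => U a + ε a) P := by
  have h := sup'_induction univ_nonempty (fun a (ε : ι → ℝ) => U a + ε a)
    (p := fun f => Integrable f P)
    (fun _ hf _ hg => hf.sup hg)
    fun a _ => (integrable_const (U a)).add (integrable_eval_of_integrable_sup'_abs hint a)
  exact h.congr (ae_of_all _ fun ε => Finset.sup'_apply _ _ ε)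

end Surplus

/-- If ties are `P`-null at `U` and `a*` is a (`P`-a.e.) maximizer
selection, then the expected maximum decomposes as the systematic utility of the chosen
alternative plus the expected error term of the chosen alternative. -/
theorem stmt7 (P : Measure (A → ℝ)) [IsProbabilityMeasure P]
    (hint : Integrable (fun ε : A → ℝ =>
      Finset.univ.sup' Finset.univ_nonempty fun a => |ε a|) P)
    (U : A → ℝ) (hties : TiesNull P U)
    (astar : (A → ℝ) → A)
    (hastar : ∀ᵐ ε ∂P, ∀ b, U b + ε b ≤ U (astar ε) + ε (astar ε)) :
    gfun P U = ∑ a, U a * choiceProb P U a + ∫ ε, ε (astar ε) ∂P := by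
  have hchosen : ∀ᵐ ε ∂P, ε ∈ choiceEvent U (astar ε) := by
    filter_upwards [hastar, measure_eq_zero_iff_ae_notMem.mp hties] with ε hmax hnt
    exact mem_choiceEvent_of_isMax_of_not_tie hmax hnt
  have hsplit : (fun ε => ε (astar ε)) =ᵐ[P] fun ε =>
      (univ.sup' univ_nonempty fun a => U a + ε a) -
        ∑ b, (choiceEvent U b).indicator (fun _ => U b) ε := by
    filter_upwards [hastar, hchosen] with ε hmax hmem
    rw [sup'_add_eq_of_isMax hmax, sum_indicator_choiceEvent_of_mem hmem]
    ring
  rw [integral_congr_ae hsplit,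
    integral_sub (integrable_sup'_add_of_integrable_sup'_abs hint U)
      (integrable_sum_indicator_choiceEvent P U),
    integral_sum_indicator_choiceEvent]
  simp only [gfun, choiceProb, choiceEvent, measureReal_def]
  ring

end
end
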